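/- Let F ∈ L[X] be a polynomial of degree at most d ≥ 1, let A ≤ B be integers with D = B − A, let N ≥ d+1, and let x_1, …, x_N be distinct integers in [A, B]. Then for every finite place v of L one has log max{1, |F|_v} ≤ log|1/D!|_v + (1/(N−d)) · Σ_{i=1}^N log max{1, |F(x_i)|_v}. -/

import Mathlib

open NumberField Polynomial IsDedekindDomain Nat
open scoped Classical

/-- The integer-valued `𝔭`-adic valuation on a number field `L`, normalized so that a
uniformizer has valuation `1` (with the junk value `0` at `x = 0`). -/
noncomputable def intValOn {L : Type*} [Field L] [NumberField L]
    (v : HeightOneSpectrum (𝓞 L)) (x : L) : ℤ :=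
  if h : x = 0 then 0
  else -Multiplicative.toAdd (WithZero.unzero ((v.valuation L).ne_zero_iff.mpr h))

/-- The normalized `𝔭`-adic absolute value `‖x‖_𝔭 = (N𝔭)^{-v_𝔭(x)}`, i.e. the `d_v`-th power
`|x|_v^{d_v}` of the absolute value `|·|_v` normalized by `|p|_v = 1/p`
(where `d_v = [L_v : ℚ_p]` is the local degree); thus for every `x ∈ L`,
`log (finAbs v x) = d_v · log |x|_v`. -/
noncomputable def finAbs {L : Type*} [Field L] [NumberField L]
    (v : HeightOneSpectrum (𝓞 L)) (x : L) : ℝ :=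
  if x = 0 then 0 else (Ideal.absNorm v.asIdeal : ℝ) ^ (-(intValOn v x))

/-- `|P|_v = max_i |a_i|_v` for `P = Σ_i a_i X^i` and `v` an absolute value on `L`. -/
noncomputable def polyNorm {L : Type*} [Field L] (v : L → ℝ) (P : L[X]) : ℝ :=
  ⨆ i, v (P.coeff i)

/-- The absolute logarithmic Weil height `h(x) = Σ_v (d_v/d_L) log max{1, |x|_v}` of `x ∈ L`:
the finite-place part is written using `finAbs` (recall `log (finAbs v x) = d_v log |x|_v`),
and for an infinite place `v`, `d_v` is `InfinitePlace.mult v`. -/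
noncomputable def elemHeight {L : Type*} [Field L] [NumberField L] (x : L) : ℝ :=
  (1 / (Module.finrank ℚ L : ℝ)) *
    ((∑ᶠ v : HeightOneSpectrum (𝓞 L), Real.log (max 1 (finAbs v x))) +
      ∑ v : InfinitePlace L, (v.mult : ℝ) * Real.log (max 1 (v x)))

/-- The height `h(P) = Σ_v (d_v/d_L) log max{1, |P|_v}` of a polynomial `P ∈ L[X]`. -/
noncomputable def polyHeight {L : Type*} [Field L] [NumberField L] (P : L[X]) : ℝ :=
  (1 / (Module.finrank ℚ L : ℝ)) *
    ((∑ᶠ v : HeightOneSpectrum (𝓞 L), Real.log (max 1 (polyNorm (finAbs v) P))) +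
      ∑ v : InfinitePlace L, (v.mult : ℝ) * Real.log (max 1 (polyNorm (⇑v) P)))

/-- The projective height `Σ_v (d_v/d_L) log max_c |c|_v` of the coefficient tuple of a pair of
polynomials `(P, Q)` (not both zero); for `P, Q` coprime with `F = P/Q` this is the height
`h(F)` of the rational fraction `F`, independent of the chosen representation. -/
noncomputable def pairHeight {L : Type*} [Field L] [NumberField L] (P Q : L[X]) : ℝ :=
  (1 / (Module.finrank ℚ L : ℝ)) *
    ((∑ᶠ v : HeightOneSpectrum (𝓞 L),
        Real.log (max (polyNorm (finAbs v) P) (polyNorm (finAbs v) Q))) +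
      ∑ v : InfinitePlace L, (v.mult : ℝ) *
        Real.log (max (polyNorm (⇑v) P) (polyNorm (⇑v) Q)))

/-- `h°(x) = (1/d_L) log |N_{L/ℚ}(x)|` for a nonzero algebraic integer `x`. -/
noncomputable def normHeight {L : Type*} [Field L] [NumberField L] (x : 𝓞 L) : ℝ :=
  (1 / (Module.finrank ℚ L : ℝ)) * Real.log |(Algebra.norm ℤ x : ℝ)|

/-!
Interpolate `F` (Lagrange) at the `d + 1` nodes where `|F(x_i)|_v` is smallest, and let `m` be
the largest of these values. By the ultrametric inequality `|F|_v ≤ m · max_i |L_i|_v` for the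
Lagrange basis `L_i = ∏_{k ≠ i} (X - x_k) / ∏_{k ≠ i} (x_i - x_k)`. Its numerator has integer
coefficients, and its denominator divides `(x_i - A)! (B - x_i)!`, hence `D!`; so
`|L_i|_v ≤ |1/D!|_v`. The remaining `N - d` nodes all have `|F(x_i)|_v ≥ m`, which gives
`(N - d) log max{1, m} ≤ Σ_i log max{1, |F(x_i)|_v}`.
-/

open Finset

theorem finAbs_eq_adicAbv {L : Type*} [Field L] [NumberField L]
    (v : HeightOneSpectrum (𝓞 L)) : finAbs v = NumberField.HeightOneSpectrum.adicAbv L v := by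
  ext x
  rw [NumberField.HeightOneSpectrum.adicAbv_def, finAbs, intValOn]
  by_cases hx : x = 0
  · simp [hx]
  · rw [if_neg hx, dif_neg hx, neg_neg, WithZeroMulInt.toNNReal_neg_apply, NNReal.coe_zpow,
      NNReal.coe_natCast]

theorem polyNorm_eq_gaussNorm {K : Type*} [Field K] (abv : AbsoluteValue K ℝ) (P : K[X]) :
    polyNorm abv P = P.gaussNorm abv 1 := by
  have hle (i : ℕ) : abv (P.coeff i) ≤ P.gaussNorm abv 1 := by
    simpa using P.le_gaussNorm abv zero_le_one i
  obtain ⟨i, hi⟩ := P.exists_eq_gaussNorm abv 1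
  refine le_antisymm (ciSup_le hle) ?_
  rw [hi, one_pow, mul_one]
  exact le_ciSup ⟨_, Set.forall_mem_range.mpr hle⟩ i

theorem Finset.prod_dvd_factorial_of_injOn {ι : Type*} {s : Finset ι} {f : ι → ℕ} {a : ℕ}
    (hf : Set.InjOn f s) (hs : ∀ i ∈ s, f i ∈ Icc 1 a) : ∏ i ∈ s, f i ∣ a ! := by
  classical
  calc ∏ i ∈ s, f i = ∏ n ∈ s.image f, n := (prod_image (f := id) hf).symm
    _ ∣ ∏ n ∈ Icc 1 a, n := prod_dvd_prod_of_subset _ _ _ (image_subset_iff.mpr hs)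
    _ = a ! := by rw [← Ico_add_one_right_eq_Icc, prod_Ico_id_eq_factorial]

theorem Int.prod_sub_dvd_factorial {ι : Type*} {s : Finset ι} {y : ι → ℤ} {c A B : ℤ} {D : ℕ}
    (hD : (D : ℤ) = B - A) (hy : Set.InjOn y s) (hys : ∀ i ∈ s, y i ∈ Set.Icc A B)
    (hc : c ∈ Set.Icc A B) (hcs : ∀ i ∈ s, y i ≠ c) :
    ∏ i ∈ s, (c - y i) ∣ (D ! : ℤ) := by
  classical
  obtain ⟨hAc, hcB⟩ := hc
  rw [← Int.natAbs_dvd_natAbs, Int.natAbs_natCast, ← Int.natAbsHom_apply, map_prod,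
    ← prod_filter_mul_prod_filter_not s (fun i => y i < c)]
  simp only [Int.natAbsHom_apply]
  have hsplit : D = (c - A).toNat + (B - c).toNat := by omega
  rw [hsplit]
  refine (mul_dvd_mul ?_ ?_).trans (Nat.factorial_mul_factorial_dvd_factorial_add _ _)
  · refine prod_dvd_factorial_of_injOn (fun i hi j hj hij => hy (mem_filter.mp hi).1
      (mem_filter.mp hj).1 ?_) fun i hi => ?_
    · simp only [coe_filter, Set.mem_ofPred_eq] at hi hj
      omega
    · obtain ⟨hi, hlt⟩ := mem_filter.mp hi
      have := (hys i hi).1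
      rw [mem_Icc]
      omega
  · refine prod_dvd_factorial_of_injOn (fun i hi j hj hij => hy (mem_filter.mp hi).1
      (mem_filter.mp hj).1 ?_) fun i hi => ?_
    · simp only [coe_filter, Set.mem_ofPred_eq] at hi hj
      omega
    · obtain ⟨hi, hge⟩ := mem_filter.mp hi
      have := (hys i hi).2
      have := hcs i hi
      rw [mem_Icc]
      omega

section Nonarchimedean

variable {K : Type*} [Field K] {abv : AbsoluteValue K ℝ}

theorem IsNonarchimedean.apply_intCast_le_of_dvd (hna : IsNonarchimedean abv) {a b : ℤ}
    (h : a ∣ b) : abv (b : K) ≤ abv (a : K) := by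
  obtain ⟨c, rfl⟩ := h
  rw [Int.cast_mul, map_mul]
  exact mul_le_of_le_one_right (abv.nonneg _) hna.apply_intCast_le_one

theorem Lagrange.gaussNorm_nodal_intCast_le_one (hna : IsNonarchimedean abv) {ι : Type*}
    (s : Finset ι) (y : ι → ℤ) : (Lagrange.nodal s fun i => (y i : K)).gaussNorm abv 1 ≤ 1 := by
  have hmap : (Lagrange.nodal s fun i => (y i : K)) =
      (Lagrange.nodal s y).map (Int.castRingHom K) := by
    simp [Lagrange.nodal, Polynomial.map_prod]
  obtain ⟨n, hn⟩ := (Lagrange.nodal s fun i => (y i : K)).exists_eq_gaussNorm abv 1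
  rw [hn, hmap, coeff_map, one_pow, mul_one, eq_intCast]
  exact hna.apply_intCast_le_one

theorem Lagrange.gaussNorm_basis_intCast_le [CharZero K] (hna : IsNonarchimedean abv)
    {ι : Type*} [DecidableEq ι] {s : Finset ι} {y : ι → ℤ} {A B : ℤ} {D : ℕ}
    (hD : (D : ℤ) = B - A) (hy : Set.InjOn y s) (hys : ∀ i ∈ s, y i ∈ Set.Icc A B)
    {i : ι} (hi : i ∈ s) :
    (Lagrange.basis s (fun k => (y k : K)) i).gaussNorm abv 1 ≤ abv ((D ! : K)⁻¹) := by
  have hweight : Lagrange.nodalWeight s (fun k => (y k : K)) i =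
      ((∏ k ∈ s.erase i, (y i - y k) : ℤ) : K)⁻¹ := by
    simp [Lagrange.nodalWeight, prod_inv_distrib]
  have hdvd : ∏ k ∈ s.erase i, (y i - y k) ∣ (D ! : ℤ) :=
    Int.prod_sub_dvd_factorial hD (hy.mono (s.erase_subset i))
      (fun k hk => hys k (mem_of_mem_erase hk)) (hys i hi)
      fun k hk hki => ne_of_mem_erase hk (hy (mem_of_mem_erase hk) hi hki)
  rw [Lagrange.basis_eq_prod_sub_inv_mul_nodal_div hi, ← Lagrange.nodal_erase_eq_nodal_div hi,
    gaussNorm_mul hna one_pos, gaussNorm_C, hweight, map_inv₀, map_inv₀]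
  calc (abv _)⁻¹ * _ ≤ (abv _)⁻¹ * 1 := by
        gcongr
        exact Lagrange.gaussNorm_nodal_intCast_le_one hna _ y
    _ ≤ (abv (D ! : K))⁻¹ := by
        rw [mul_one]
        refine inv_anti₀ (abv.pos (Nat.cast_ne_zero.mpr D.factorial_ne_zero)) ?_
        exact_mod_cast hna.apply_intCast_le_of_dvd hdvd

theorem Polynomial.gaussNorm_le_mul_of_forall_eval_le (hna : IsNonarchimedean abv) {ι : Type*}
    [DecidableEq ι] {s : Finset ι} {v : ι → K} (hv : Set.InjOn v s) {F : K[X]}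
    (hdeg : F.degree < #s) {m t : ℝ} (hm : 0 ≤ m) (ht : 0 ≤ t)
    (hF : ∀ i ∈ s, abv (F.eval (v i)) ≤ m)
    (hbasis : ∀ i ∈ s, (Lagrange.basis s v i).gaussNorm abv 1 ≤ t) :
    F.gaussNorm abv 1 ≤ m * t := by
  rw [Lagrange.eq_interpolate hv hdeg, Lagrange.interpolate_apply]
  refine sum_induction _ (fun P : K[X] => P.gaussNorm abv 1 ≤ m * t) (fun P Q hP hQ => ?_)
    (by simpa using mul_nonneg hm ht) fun i hi => ?_
  · exact (isNonarchimedean_gaussNorm abv hna zero_le_one P Q).trans (max_le hP hQ)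
  · rw [gaussNorm_mul hna one_pos, gaussNorm_C]
    exact mul_le_mul (hF i hi) (hbasis i hi) (gaussNorm_nonneg _ _ zero_le_one) hm

end Nonarchimedean

theorem Tuple.exists_card_le_and_card_ge {α : Type*} [LinearOrder α] {N : ℕ} (g : Fin N → α)
    {d : ℕ} (hd : d < N) :
    ∃ j, ∃ S : Finset (Fin N), #S = d + 1 ∧ (∀ i ∈ S, g i ≤ g j) ∧
      N - d ≤ #{i | g j ≤ g i} := by
  set σ := Tuple.sort g
  have hmono : Monotone (g ∘ σ) := Tuple.monotone_sort g
  refine ⟨σ ⟨d, hd⟩, (Iic ⟨d, hd⟩).map σ.toEmbedding, by simp, fun i hi => ?_, ?_⟩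
  · obtain ⟨k, hk, rfl⟩ := mem_map.mp hi
    exact hmono (mem_Iic.mp hk)
  · calc N - d = #((Ici ⟨d, hd⟩).map σ.toEmbedding) := by simp
      _ ≤ #{i | g (σ ⟨d, hd⟩) ≤ g i} := card_le_card fun i hi => by
        obtain ⟨k, hk, rfl⟩ := mem_map.mp hi
        exact mem_filter.mpr ⟨mem_univ _, hmono (mem_Ici.mp hk)⟩

theorem Finset.mul_log_max_one_le_sum {ι : Type*} [Fintype ι] (g : ι → ℝ) {m : ℝ} {n : ℕ}
    (hn : n ≤ #{i | m ≤ g i}) :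
    n * Real.log (max 1 m) ≤ ∑ i, Real.log (max 1 (g i)) :=
  calc n * Real.log (max 1 m)
      ≤ #{i | m ≤ g i} • Real.log (max 1 m) := by
        rw [nsmul_eq_mul]
        gcongr
        exact Real.log_nonneg (le_max_left _ _)
    _ ≤ ∑ i ∈ {i | m ≤ g i}, Real.log (max 1 (g i)) :=
        card_nsmul_le_sum _ _ _ fun i hi => Real.log_le_log (by positivity)
          (max_le_max le_rfl (mem_filter.mp hi).2)
    _ ≤ ∑ i, Real.log (max 1 (g i)) :=
        sum_le_sum_of_subset_of_nonneg (filter_subset _ _)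
          fun _ _ _ => Real.log_nonneg (le_max_left _ _)

theorem IsNonarchimedean.log_max_one_gaussNorm_le {K : Type*} [Field K] [CharZero K]
    {abv : AbsoluteValue K ℝ} (hna : IsNonarchimedean abv) {d : ℕ} {F : K[X]}
    (hdeg : F.natDegree ≤ d) {A B : ℤ} {D : ℕ} (hD : (D : ℤ) = B - A) {N : ℕ} (hN : d + 1 ≤ N)
    {x : Fin N → ℤ} (hinj : Function.Injective x) (hx : ∀ i, x i ∈ Set.Icc A B) :
    Real.log (max 1 (F.gaussNorm abv 1)) ≤ Real.log (abv ((D ! : K)⁻¹)) +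
      (1 / ((N : ℝ) - d)) * ∑ i, Real.log (max 1 (abv (F.eval (x i : K)))) := by
  set g : Fin N → ℝ := fun i => abv (F.eval (x i : K))
  obtain ⟨j, S, hS, hSle, hcard⟩ := Tuple.exists_card_le_and_card_ge g hN
  have ht : 1 ≤ abv ((D ! : K)⁻¹) := by
    rw [map_inv₀]
    exact (one_le_inv₀ (abv.pos (Nat.cast_ne_zero.mpr D.factorial_ne_zero))).mpr
      hna.apply_natCast_le_one
  set m := g j
  set t := abv ((D ! : K)⁻¹)
  have hdegS : F.degree < #S := by
    rw [hS]
    exact degree_le_natDegree.trans_lt (by exact_mod_cast Nat.lt_succ_of_le hdeg)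
  have hF : F.gaussNorm abv 1 ≤ m * t :=
    gaussNorm_le_mul_of_forall_eval_le hna (fun i _ k _ h => hinj (Int.cast_injective h)) hdegS
      (abv.nonneg _) (by linarith) hSle
      fun i hi => Lagrange.gaussNorm_basis_intCast_le hna hD hinj.injOn (fun i _ => hx i) hi
  have hlog : Real.log (max 1 (F.gaussNorm abv 1)) ≤ Real.log t + Real.log (max 1 m) := by
    rw [← Real.log_mul (by positivity) (by positivity)]
    refine Real.log_le_log (by positivity) (max_le ?_ ?_)
    · nlinarith [le_max_left 1 m]
    · nlinarith [le_max_right 1 m]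
  have hNd : 0 < (N : ℝ) - d := by
    rw [sub_pos]
    exact_mod_cast hN
  have hmean : Real.log (max 1 m) ≤ (∑ i, Real.log (max 1 (g i))) / ((N : ℝ) - d) := by
    rw [le_div_iff₀ hNd, mul_comm, ← Nat.cast_sub (by omega)]
    exact mul_log_max_one_le_sum g hcard
  rw [one_div_mul_eq_div]
  linarith

theorem stmt_4_general {L : Type*} [Field L] [NumberField L]
    (d : ℕ) (F : L[X]) (hdeg : F.natDegree ≤ d)
    (A B : ℤ) (D : ℕ) (hD : (D : ℤ) = B - A)
    (N : ℕ) (hN : d + 1 ≤ N)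
    (x : Fin N → ℤ) (hinj : Function.Injective x) (hx : ∀ i, x i ∈ Set.Icc A B)
    (v : HeightOneSpectrum (𝓞 L)) :
    Real.log (max 1 (polyNorm (finAbs v) F)) ≤
      Real.log (finAbs v ((D ! : L)⁻¹))
      + (1 / ((N : ℝ) - (d : ℝ))) *
          ∑ i, Real.log (max 1 (finAbs v (F.eval ((x i : ℤ) : L)))) := by
  rw [finAbs_eq_adicAbv, polyNorm_eq_gaussNorm]
  exact (NumberField.HeightOneSpectrum.isNonarchimedean_adicAbv L v).log_max_one_gaussNorm_le
    hdeg hD hN hinj hx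

/-- Let `F ∈ L[X]` of degree at most `d ≥ 1`, `N ≥ d+1`, and let
`x 0, …, x (N-1)` be distinct integers in `[A, B]`, `D = B − A`. Then for every finite place
`v` of `L`, `log max{1, |F|_v} ≤ log |1/D!|_v + (1/(N−d)) Σ_i log max{1, |F(x_i)|_v}`
(stated, equivalently, after multiplying both sides of the inequality by the local degree
`d_v`, i.e. using the normalization `finAbs`). -/
theorem stmt_4 {L : Type*} [Field L] [NumberField L]
    (d : ℕ) (hd : 1 ≤ d) (F : L[X]) (hdeg : F.natDegree ≤ d)
    (A B : ℤ) (hAB : A ≤ B) (D : ℕ) (hD : (D : ℤ) = B - A)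
    (N : ℕ) (hN : d + 1 ≤ N)
    (x : Fin N → ℤ) (hinj : Function.Injective x) (hx : ∀ i, x i ∈ Set.Icc A B)
    (v : HeightOneSpectrum (𝓞 L)) :
    Real.log (max 1 (polyNorm (finAbs v) F)) ≤
      Real.log (finAbs v ((D ! : L)⁻¹))
      + (1 / ((N : ℝ) - (d : ℝ))) *
          ∑ i, Real.log (max 1 (finAbs v (F.eval ((x i : ℤ) : L)))) :=
  stmt_4_general d F hdeg A B D hD N hN x hinj hx v
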